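/- arXiv:1105.1188 — 2 statements merged into one kernel-verified Lean document; each statement's English description precedes it below -/
import Mathlib

section
/- With the degree function d on GL_n(ℤ) defined via reduced stochastic log-matrices, if P is a permutation matrix in GL_n(ℤ) arising from the action of S_{n+1} on the coordinates (i.e., an element of the image of the embedding S_{n+1} → GL_n(ℤ) given by permuting the vectors e₁−e₀, …, eₙ−e₀ where the eᵢ are permuted), then d(PgQ) = d(g) for all g ∈ GL_n(ℤ) and all P, Q in this subgroup. -/
/-!
The extension `g ↦ M_g` is multiplicative, and for the embedded permutations
`(M_P)ᵢⱼ = [σ j = i] - [σ 0 = i]`. Since the columns of `M_g` sum to zero, this gives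
`(M_{PgQ})ᵢⱼ = (M_g)_{σ⁻¹i, τj} - (M_g)_{σ⁻¹i, τ0}`: the rows are permuted and each row is
shifted by a constant, which shifts its minimum by the same constant. Column `0` of `M_g` is
zero, so `d(g) = -∑ᵢ minⱼ (M_g)ᵢⱼ`, and the shifts add up to a column sum of `M_g`, i.e. to `0`.
-/

/-- The (n+1)×(n+1) zero-column-sum extension of an n×n integer matrix g. -/
def Mg {n : ℕ} (g : Matrix (Fin n) (Fin n) ℤ) : Matrix (Fin (n + 1)) (Fin (n + 1)) ℤ :=
  Matrix.of fun i j =>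
    if hj : j.val = 0 then 0
    else if hi : i.val = 0 then
      -∑ k : Fin n, g k ⟨j.val - 1, by have := j.isLt; omega⟩
    else g ⟨i.val - 1, by have := i.isLt; omega⟩ ⟨j.val - 1, by have := j.isLt; omega⟩

/-- The degree of the monomial Cremona transformation associated to g. -/
def cremonaDeg {n : ℕ} (g : Matrix (Fin n) (Fin n) ℤ) : ℤ :=
  ∑ i : Fin (n + 1), max 0 (-(Finset.univ.inf' Finset.univ_nonempty (Mg g i)))

/-- The matrix in GL_n(ℤ) of the automorphism of Λ₀ induced by a permutation σ of the
n+1 coordinates, in the basis (e₁−e₀, …, eₙ−e₀): it sends eⱼ−e₀ to e_{σ(j)}−e_{σ(0)}. -/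
def permMat {n : ℕ} (σ : Equiv.Perm (Fin (n + 1))) : Matrix (Fin n) (Fin n) ℤ :=
  Matrix.of fun i j =>
    (if σ j.succ = i.succ then 1 else 0) - (if σ 0 = i.succ then 1 else 0)

open Finset

theorem Finset.inf'_univ_perm_sub {α G : Type*} [Fintype α] [Nonempty α] [AddCommGroup G]
    [LinearOrder G] [IsOrderedAddMonoid G] (e : Equiv.Perm α) (f : α → G) (c : G) :
    univ.inf' univ_nonempty (fun j => f (e j) - c) = univ.inf' univ_nonempty f - c := by
  calc univ.inf' univ_nonempty (fun j => f (e j) - c)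
      = univ.inf' univ_nonempty (f ∘ e.toEmbedding) - c :=
        (map_finset_inf' (OrderIso.subRight c) univ_nonempty (f ∘ e.toEmbedding)).symm
    _ = univ.inf' univ_nonempty f - c := by
        rw [inf'_comp_eq_map f univ_nonempty]
        simp only [map_univ_equiv]

section Extension

variable {n : ℕ}

lemma Mg_apply_zero_right (A : Matrix (Fin n) (Fin n) ℤ) (i : Fin (n + 1)) : Mg A i 0 = 0 := by
  simp [Mg]

lemma Mg_succ_succ (A : Matrix (Fin n) (Fin n) ℤ) (a b : Fin n) :
    Mg A a.succ b.succ = A a b := by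
  simp [Mg, Fin.val_succ]

lemma Mg_zero_succ (A : Matrix (Fin n) (Fin n) ℤ) (b : Fin n) :
    Mg A 0 b.succ = -∑ k, A k b := by
  simp [Mg, Fin.val_succ]

lemma sum_Mg_apply (A : Matrix (Fin n) (Fin n) ℤ) (j : Fin (n + 1)) : ∑ i, Mg A i j = 0 := by
  cases j using Fin.cases with
  | zero => simp [Mg_apply_zero_right]
  | succ b => simp [Fin.sum_univ_succ, Mg_zero_succ, Mg_succ_succ]

lemma Mg_mul (A B : Matrix (Fin n) (Fin n) ℤ) : Mg (A * B) = Mg A * Mg B := by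
  ext i j
  cases j using Fin.cases with
  | zero => simp [Matrix.mul_apply, Mg_apply_zero_right]
  | succ b =>
    cases i using Fin.cases with
    | zero =>
      simp only [Matrix.mul_apply, Fin.sum_univ_succ, Mg_apply_zero_right, Mg_zero_succ,
        Mg_succ_succ, zero_mul, zero_add, neg_mul, sum_neg_distrib, sum_mul]
      rw [sum_comm]
    | succ a => simp [Matrix.mul_apply, Fin.sum_univ_succ, Mg_apply_zero_right, Mg_succ_succ]

lemma sum_ite_succ_eq (c : Fin (n + 1)) :
    ∑ a : Fin n, (if c = a.succ then (1 : ℤ) else 0) = if c = 0 then 0 else 1 := by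
  cases c using Fin.cases with
  | zero => simp [(Fin.succ_ne_zero _).symm]
  | succ m => simp [Fin.succ_ne_zero]

lemma Mg_permMat_apply (σ : Equiv.Perm (Fin (n + 1))) (i j : Fin (n + 1)) :
    Mg (permMat σ) i j = (if σ j = i then 1 else 0) - (if σ 0 = i then 1 else 0) := by
  cases j using Fin.cases with
  | zero => simp [Mg_apply_zero_right]
  | succ b =>
    cases i using Fin.cases with
    | zero =>
      simp only [Mg_zero_succ, permMat, Matrix.of_apply, sum_sub_distrib, sum_ite_succ_eq]
      by_cases h₁ : σ b.succ = 0 <;> by_cases h₂ : σ 0 = 0 <;> simp [h₁, h₂]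
    | succ a => rw [Mg_succ_succ]; rfl

lemma Mg_permMat_mul_apply (σ : Equiv.Perm (Fin (n + 1)))
    {M : Matrix (Fin (n + 1)) (Fin (n + 1)) ℤ} (hM : ∀ j, ∑ k, M k j = 0) (i j : Fin (n + 1)) :
    (Mg (permMat σ) * M) i j = M (σ⁻¹ i) j := by
  have hσ : ∀ k, σ k = i ↔ k = σ⁻¹ i := fun k => Equiv.Perm.eq_inv_iff_eq.symm
  simp [Matrix.mul_apply, Mg_permMat_apply, sub_mul, ite_mul, hσ, hM j]

lemma mul_Mg_permMat_apply (τ : Equiv.Perm (Fin (n + 1)))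
    (M : Matrix (Fin (n + 1)) (Fin (n + 1)) ℤ) (i j : Fin (n + 1)) :
    (M * Mg (permMat τ)) i j = M i (τ j) - M i (τ 0) := by
  simp only [Matrix.mul_apply, Mg_permMat_apply, mul_sub, sum_sub_distrib, mul_ite, mul_one,
    mul_zero, sum_ite_eq, mem_univ, if_true]

lemma Mg_permMat_mul_mul_permMat_apply (σ τ : Equiv.Perm (Fin (n + 1)))
    (A : Matrix (Fin n) (Fin n) ℤ) (i j : Fin (n + 1)) :
    Mg (permMat σ * A * permMat τ) i j = Mg A (σ⁻¹ i) (τ j) - Mg A (σ⁻¹ i) (τ 0) := by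
  rw [Matrix.mul_assoc, Mg_mul, Mg_permMat_mul_apply σ (sum_Mg_apply _), Mg_mul,
    mul_Mg_permMat_apply]

lemma inf'_Mg_permMat_mul_mul_permMat (σ τ : Equiv.Perm (Fin (n + 1)))
    (A : Matrix (Fin n) (Fin n) ℤ) (i : Fin (n + 1)) :
    univ.inf' univ_nonempty (Mg (permMat σ * A * permMat τ) i) =
      univ.inf' univ_nonempty (Mg A (σ⁻¹ i)) - Mg A (σ⁻¹ i) (τ 0) := by
  simp only [funext (Mg_permMat_mul_mul_permMat_apply σ τ A i), inf'_univ_perm_sub]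

-- Column `0` of `Mg A` vanishes, so every row minimum is `≤ 0` and the truncation is inactive.
lemma cremonaDeg_eq_neg_sum_inf' (A : Matrix (Fin n) (Fin n) ℤ) :
    cremonaDeg A = -∑ i, univ.inf' univ_nonempty (Mg A i) := by
  rw [cremonaDeg, ← sum_neg_distrib]
  refine sum_congr rfl fun i _ => max_eq_right ?_
  have := inf'_le (Mg A i) (mem_univ 0)
  rw [Mg_apply_zero_right] at this
  omega

theorem cremonaDeg_permMat_mul_mul_permMat (σ τ : Equiv.Perm (Fin (n + 1)))
    (A : Matrix (Fin n) (Fin n) ℤ) :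
    cremonaDeg (permMat σ * A * permMat τ) = cremonaDeg A := by
  rw [cremonaDeg_eq_neg_sum_inf', cremonaDeg_eq_neg_sum_inf']
  simp only [inf'_Mg_permMat_mul_mul_permMat, sum_sub_distrib]
  rw [Equiv.sum_comp σ⁻¹ (fun r => univ.inf' univ_nonempty (Mg A r)),
    Equiv.sum_comp σ⁻¹ (fun r => Mg A r (τ 0)), sum_Mg_apply, sub_zero]

end Extension

theorem stmt7_general (n : ℕ) (σ τ : Equiv.Perm (Fin (n + 1)))
    (g : GL (Fin n) ℤ) :
    cremonaDeg (permMat σ * (g : Matrix (Fin n) (Fin n) ℤ) * permMat τ) =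
      cremonaDeg (g : Matrix (Fin n) (Fin n) ℤ) :=
  cremonaDeg_permMat_mul_mul_permMat σ τ g

/-- d is constant on double cosets of the embedded S_{n+1}:
d(PgQ) = d(g) for permutation matrices P, Q. -/
theorem stmt7 (n : ℕ) (hn : 2 ≤ n) (σ τ : Equiv.Perm (Fin (n + 1)))
    (g : GL (Fin n) ℤ) :
    cremonaDeg (permMat σ * (g : Matrix (Fin n) (Fin n) ℤ) * permMat τ) =
      cremonaDeg (g : Matrix (Fin n) (Fin n) ℤ) :=
  stmt7_general n σ τ g
end

section
/- Let A be a 2-stochastic (n+1)×(n+1) integer log-matrix (each column has entries summing to 2) whose associated graph G on the n+1 row indices — with one edge (or loop) per column, joining the (at most two) rows with nonzero entries — is a path v₀v₁⋯v_{n−1} with a loop attached at v₀ (so the columns are x₀², x₀x₁, x₁x₂, …, x_{n−1}x_n in monomial terms). Then A restricts to an automorphism of Λ₀, and the inverse degree (1/2 − Σᵢ rᵢ, rᵢ the least entry in row i of A⁻¹) equals n. -/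
/-!
The columns of `A` sum to `2`, so `𝟙ᵀ A = 2 𝟙ᵀ` and `A` maps `Λ₀ = {v | ∑ vᵢ = 0}` into itself,
injectively because `A` is invertible over `ℚ`. Back-substitution in the bidiagonal system
`A v = w` gives `A⁻¹ = B + ½ e₀ 𝟙ᵀ`, where `B` is the integer matrix with row `0` equal to
`(-(j mod 2))_j` and row `i ≥ 1` equal to `((-1) ^ (j - i))_{j ≥ i}`. On `Λ₀` the rank-one
correction vanishes, so `B w` is an integral preimage of `w`. The row minima of `A⁻¹` are
`-1/2` (row `0`), `-1` (rows `1, …, n - 1`) and `0` (row `n`), whence `1/2 - ∑ rᵢ = n`.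
-/

open Finset Matrix

namespace Matrix

variable {R ι : Type*} [Fintype ι]

theorem sum_mulVec_of_sum_col_eq [NonUnitalNonAssocSemiring R] {A : Matrix ι ι R} {c : R}
    (hA : ∀ j, ∑ i, A i j = c) (v : ι → R) : ∑ i, (A *ᵥ v) i = c * ∑ i, v i := by
  simp only [mulVec, dotProduct, mul_sum]
  rw [sum_comm]
  simp only [← sum_mul, hA]

theorem bijOn_sum_eq_zero_of_sum_col_eq [NonUnitalNonAssocSemiring R] [NoZeroDivisors R]
    {A : Matrix ι ι R} {c : R} (hc : c ≠ 0) (hA : ∀ j, ∑ i, A i j = c)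
    (hinj : Function.Injective A.mulVec)
    (hsurj : ∀ w, ∑ i, w i = 0 → ∃ v, A *ᵥ v = w) :
    Set.BijOn A.mulVec {v | ∑ i, v i = 0} {v | ∑ i, v i = 0} := by
  refine ⟨fun v hv => ?_, hinj.injOn, fun w hw => ?_⟩
  · simp_all [sum_mulVec_of_sum_col_eq hA]
  · obtain ⟨v, rfl⟩ := hsurj w hw
    refine ⟨v, ?_, rfl⟩
    simpa [sum_mulVec_of_sum_col_eq hA, hc] using hw

end Matrix

def pathLoopMatrix (R : Type*) [NonAssocSemiring R] (n : ℕ) :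
    Matrix (Fin (n + 1)) (Fin (n + 1)) R :=
  Matrix.of fun i j =>
    if j.val = 0 then (if i.val = 0 then 2 else 0)
    else if i.val = j.val - 1 ∨ i.val = j.val then 1 else 0

section
variable {R : Type*} [NonAssocSemiring R] {n : ℕ}

theorem pathLoopMatrix_map {S : Type*} [NonAssocSemiring S] (f : R →+* S) :
    (pathLoopMatrix R n).map f = pathLoopMatrix S n := by
  ext i j
  simp only [pathLoopMatrix, map_apply, of_apply]
  split_ifs <;> simp [map_ofNat f 2]

theorem mul_pathLoopMatrix_apply_zero {m : Type*} (M : Matrix m (Fin (n + 1)) R) (i : m) :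
    (M * pathLoopMatrix R n) i 0 = M i 0 * 2 := by
  simp [mul_apply, pathLoopMatrix, Fin.val_eq_zero_iff]

theorem mul_pathLoopMatrix_apply_succ {m : Type*} (M : Matrix m (Fin (n + 1)) R) (i : m)
    (k : Fin n) :
    (M * pathLoopMatrix R n) i k.succ = M i k.castSucc + M i k.succ := by
  have hcol : ∀ l : Fin (n + 1), pathLoopMatrix R n l k.succ =
      (if l = k.castSucc then 1 else 0) + (if l = k.succ then 1 else 0) := by
    intro l
    simp only [pathLoopMatrix, of_apply, Fin.ext_iff, Fin.val_succ, Fin.val_castSucc]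
    split_ifs <;> simp_all
  simp [mul_apply, hcol, mul_add, sum_add_distrib]

theorem sum_pathLoopMatrix_col (j : Fin (n + 1)) : ∑ i, pathLoopMatrix R n i j = 2 := by
  have h : ∑ i, pathLoopMatrix R n i j =
      (of (fun (_ : Unit) (_ : Fin (n + 1)) => (1 : R)) * pathLoopMatrix R n) () j := by
    simp [mul_apply]
  rw [h]
  cases j using Fin.cases with
  | zero => simp [mul_pathLoopMatrix_apply_zero]
  | succ k => simp [mul_pathLoopMatrix_apply_succ, one_add_one_eq_two]

end

def pathLoopInvInt (n : ℕ) : Matrix (Fin (n + 1)) (Fin (n + 1)) ℤ :=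
  Matrix.of fun i j =>
    if i.val = 0 then -((j.val % 2 : ℕ) : ℤ)
    else if i.val ≤ j.val then (-1) ^ (j.val - i.val) else 0

def pathLoopInv (n : ℕ) : Matrix (Fin (n + 1)) (Fin (n + 1)) ℚ :=
  Matrix.of fun i j => (pathLoopInvInt n i j : ℚ) + if i = 0 then 1 / 2 else 0

section
variable {n : ℕ}

theorem pathLoopInvInt_apply_zero_right (i : Fin (n + 1)) : pathLoopInvInt n i 0 = 0 := by
  simp +contextual [pathLoopInvInt]

theorem pathLoopInvInt_add_apply_succ (i : Fin (n + 1)) (k : Fin n) :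
    pathLoopInvInt n i k.castSucc + pathLoopInvInt n i k.succ =
      (if i = k.succ then 1 else 0) - (if i = 0 then 1 else 0) := by
  simp only [pathLoopInvInt, of_apply, Fin.ext_iff, Fin.val_succ, Fin.val_castSucc, Fin.val_zero]
  by_cases hi : i.val = 0
  · simp [hi]
    omega
  · rcases lt_trichotomy i.val (k.val + 1) with h | h | h
    · obtain ⟨m, hm⟩ : ∃ m, k.val + 1 - i.val = m + 1 := ⟨k.val - i.val, by omega⟩
      have hk : k.val - i.val = m := by omega
      simp [hi, hm, hk, pow_succ, show i.val ≤ k.val by omega, h.le, h.ne]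
    · simp [h]
    · simp [hi, h.ne', show ¬ i.val ≤ k.val by omega, show ¬ i.val ≤ k.val + 1 by omega]

theorem pathLoopInv_mul : pathLoopInv n * pathLoopMatrix ℚ n = 1 := by
  ext i j
  cases j using Fin.cases with
  | zero =>
    rw [mul_pathLoopMatrix_apply_zero]
    simp [pathLoopInv, pathLoopInvInt_apply_zero_right, one_apply]
  | succ k =>
    rw [mul_pathLoopMatrix_apply_succ]
    have h := congrArg (Int.cast : ℤ → ℚ) (pathLoopInvInt_add_apply_succ i k)
    simp only [pathLoopInv, of_apply, one_apply]
    push_cast at h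
    split_ifs at h ⊢ <;> linarith

theorem inv_pathLoopMatrix : (pathLoopMatrix ℚ n)⁻¹ = pathLoopInv n :=
  inv_eq_left_inv pathLoopInv_mul

theorem pathLoopMatrix_mulVec_intCast (v : Fin (n + 1) → ℤ) :
    pathLoopMatrix ℚ n *ᵥ (Int.cast ∘ v) = Int.cast ∘ (pathLoopMatrix ℤ n *ᵥ v) := by
  ext i
  have h := RingHom.map_mulVec (Int.castRingHom ℚ) (pathLoopMatrix ℤ n) v i
  rw [pathLoopMatrix_map] at h
  exact h.symm

theorem pathLoopMatrix_mulVec_injective : Function.Injective (pathLoopMatrix ℤ n).mulVec := by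
  intro u v h
  have h' := congrArg (pathLoopInv n *ᵥ ·) (pathLoopMatrix_mulVec_intCast u)
  rw [h, ← pathLoopMatrix_mulVec_intCast, mulVec_mulVec, mulVec_mulVec, pathLoopInv_mul,
    one_mulVec, one_mulVec] at h'
  exact (Int.cast_injective (α := ℚ)).comp_left h'

theorem pathLoopInv_mulVec_of_sum_eq_zero {w : Fin (n + 1) → ℤ} (hw : ∑ i, w i = 0) :
    pathLoopInv n *ᵥ (Int.cast ∘ w) = Int.cast ∘ (pathLoopInvInt n *ᵥ w) := by
  have hw' : ∑ i, (w i : ℚ) = 0 := by exact_mod_cast hw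
  ext i
  simp [pathLoopInv, mulVec, dotProduct, add_mul, sum_add_distrib, ← mul_sum, hw']

theorem pathLoopMatrix_mulVec_pathLoopInvInt_mulVec {w : Fin (n + 1) → ℤ}
    (hw : ∑ i, w i = 0) : pathLoopMatrix ℤ n *ᵥ (pathLoopInvInt n *ᵥ w) = w := by
  apply (Int.cast_injective (α := ℚ)).comp_left
  dsimp only
  rw [← pathLoopMatrix_mulVec_intCast, ← pathLoopInv_mulVec_of_sum_eq_zero hw, mulVec_mulVec,
    mul_eq_one_comm.mp pathLoopInv_mul, one_mulVec]

def pathLoopInvRowMin (n i : ℕ) : ℚ :=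
  if i = 0 then -1 / 2 else if i = n then 0 else -1

theorem pathLoopInv_zero_apply (j : Fin (n + 1)) :
    pathLoopInv n 0 j = 1 / 2 - ((j.val % 2 : ℕ) : ℚ) := by
  simp only [pathLoopInv, pathLoopInvInt, of_apply, Fin.val_zero, if_true, Int.cast_neg,
    Int.cast_natCast]
  ring

theorem pathLoopInv_apply_of_val_ne_zero {i : Fin (n + 1)} (hi : i.val ≠ 0) (j : Fin (n + 1)) :
    pathLoopInv n i j = if i.val ≤ j.val then (-1) ^ (j.val - i.val) else 0 := by
  have hi' : i ≠ 0 := fun h => hi (by simp [h])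
  simp only [pathLoopInv, pathLoopInvInt, of_apply, if_neg hi, if_neg hi', add_zero]
  split_ifs <;> simp

theorem pathLoopInvRowMin_le_pathLoopInv (i j : Fin (n + 1)) :
    pathLoopInvRowMin n i ≤ pathLoopInv n i j := by
  by_cases hi : i.val = 0
  · obtain rfl : i = 0 := Fin.ext hi
    have hj : ((j.val % 2 : ℕ) : ℚ) ≤ 1 := by
      exact_mod_cast Nat.le_of_lt_succ (Nat.mod_lt _ two_pos)
    rw [pathLoopInv_zero_apply, pathLoopInvRowMin, if_pos hi]
    linarith
  rw [pathLoopInv_apply_of_val_ne_zero hi]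
  simp only [pathLoopInvRowMin, if_neg hi]
  split_ifs with hin hij hij
  · rw [show j.val - i.val = 0 by omega, pow_zero]
    exact zero_le_one
  · exact le_rfl
  · rcases neg_one_pow_eq_or ℚ (j.val - i.val) with h | h <;> norm_num [h]
  · norm_num

theorem exists_pathLoopInv_eq_pathLoopInvRowMin (hn : 1 ≤ n) (i : Fin (n + 1)) :
    ∃ j, pathLoopInv n i j = pathLoopInvRowMin n i := by
  by_cases hi : i.val = 0
  · obtain rfl : i = 0 := Fin.ext hi
    refine ⟨⟨1, by omega⟩, ?_⟩
    rw [pathLoopInv_zero_apply, pathLoopInvRowMin, if_pos hi]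
    norm_num
  by_cases hin : i.val = n
  · refine ⟨0, ?_⟩
    rw [pathLoopInv_apply_of_val_ne_zero hi]
    simp [pathLoopInvRowMin, hin, show n ≠ 0 by omega]
  · refine ⟨⟨i.val + 1, by omega⟩, ?_⟩
    rw [pathLoopInv_apply_of_val_ne_zero hi]
    simp [pathLoopInvRowMin, hi, hin]

theorem inf'_pathLoopInv (hn : 1 ≤ n) (i : Fin (n + 1)) :
    univ.inf' univ_nonempty (pathLoopInv n i) = pathLoopInvRowMin n i := by
  obtain ⟨j, hj⟩ := exists_pathLoopInv_eq_pathLoopInvRowMin hn i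
  exact le_antisymm (hj ▸ inf'_le _ (mem_univ j))
    (le_inf' _ _ fun j _ => pathLoopInvRowMin_le_pathLoopInv i j)

theorem sum_pathLoopInvRowMin (hn : 1 ≤ n) :
    ∑ i : Fin (n + 1), pathLoopInvRowMin n i = 1 / 2 - n := by
  obtain ⟨m, rfl⟩ : ∃ m, n = m + 1 := ⟨n - 1, by omega⟩
  rw [Fin.sum_univ_eq_sum_range (pathLoopInvRowMin (m + 1)), sum_range_succ, sum_range_succ']
  have h : ∀ i ∈ range m, pathLoopInvRowMin (m + 1) (i + 1) = -1 := fun i hi => by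
    simp [pathLoopInvRowMin, (mem_range.mp hi).ne]
  rw [sum_congr rfl h]
  simp [pathLoopInvRowMin]
  ring

end

/-- The log-matrix A of φ : (x₀:…:xₙ) ↦ (x₀² : x₀x₁ : x₁x₂ : … : x_{n−1}xₙ)
(whose associated graph is a path with a loop at one end) restricts to an automorphism
of Λ₀, and the inverse degree 1/2 − Σᵢ rᵢ equals n. -/
theorem stmt19 (n : ℕ) (hn : 2 ≤ n)
    (A : Matrix (Fin (n + 1)) (Fin (n + 1)) ℤ)
    (hA : A = Matrix.of fun i j =>
      if j.val = 0 then (if i.val = 0 then 2 else 0)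
      else if i.val = j.val - 1 ∨ i.val = j.val then 1 else 0)
    (r : Fin (n + 1) → ℚ)
    (hr : ∀ i, r i = Finset.univ.inf' Finset.univ_nonempty
      ((A.map ((↑) : ℤ → ℚ))⁻¹ i)) :
    Set.BijOn A.mulVec {v | ∑ i, v i = 0} {v | ∑ i, v i = 0} ∧
      1 / (2 : ℚ) - ∑ i, r i = (n : ℚ) := by
  obtain rfl : A = pathLoopMatrix ℤ n := hA
  have hn1 : 1 ≤ n := by omega
  refine ⟨bijOn_sum_eq_zero_of_sum_col_eq two_ne_zero sum_pathLoopMatrix_col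
    pathLoopMatrix_mulVec_injective fun w hw =>
      ⟨_, pathLoopMatrix_mulVec_pathLoopInvInt_mulVec hw⟩, ?_⟩
  have hmap : (pathLoopMatrix ℤ n).map ((↑) : ℤ → ℚ) = pathLoopMatrix ℚ n :=
    pathLoopMatrix_map (Int.castRingHom ℚ)
  have hr' : ∀ i, r i = pathLoopInvRowMin n i := fun i => by
    rw [hr, hmap, inv_pathLoopMatrix, inf'_pathLoopInv hn1]
  rw [sum_congr rfl fun i _ => hr' i, sum_pathLoopInvRowMin hn1]
  ring
end
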